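/- Let D₁, D₂ ⊆ ℝ^m be closed sets, and let G₁ : D₁ ⇉ ℝ^n and G₂ : D₂ ⇉ ℝ^n be set-valued maps that are outer semicontinuous and locally bounded relative to D₁ and D₂ respectively. Define G : D₁ ∪ D₂ ⇉ ℝ^n by G(ζ) = G₁(ζ) if ζ ∈ D₁ \ D₂, G(ζ) = G₂(ζ) if ζ ∈ D₂ \ D₁, and G(ζ) = G₁(ζ) ∪ G₂(ζ) if ζ ∈ D₁ ∩ D₂. Then G is outer semicontinuous and locally bounded relative to the closed set D₁ ∪ D₂. -/

import Mathlib

open Filter Topology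

/-- A set-valued map `G : D ⇉ ℝ^n` is outer semicontinuous relative to `D`. -/
def OuterSemicontinuousRel {m n : ℕ} (D : Set (EuclideanSpace ℝ (Fin m)))
    (G : EuclideanSpace ℝ (Fin m) → Set (EuclideanSpace ℝ (Fin n))) : Prop :=
  ∀ (ζ : ℕ → EuclideanSpace ℝ (Fin m)) (z : EuclideanSpace ℝ (Fin m))
    (y : ℕ → EuclideanSpace ℝ (Fin n)) (w : EuclideanSpace ℝ (Fin n)),
    (∀ i, ζ i ∈ D) → Tendsto ζ atTop (𝓝 z) → z ∈ D →
    (∀ i, y i ∈ G (ζ i)) → Tendsto y atTop (𝓝 w) → w ∈ G z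

/-- A set-valued map `G : D ⇉ ℝ^n` is locally bounded relative to `D`. -/
def LocallyBoundedRel {m n : ℕ} (D : Set (EuclideanSpace ℝ (Fin m)))
    (G : EuclideanSpace ℝ (Fin m) → Set (EuclideanSpace ℝ (Fin n))) : Prop :=
  ∀ z ∈ D, ∃ V ∈ 𝓝 z, Bornology.IsBounded (⋃ ζ ∈ V ∩ D, G ζ)

/-- Lemma A.33 of Goebel–Sanfelice–Teel: the union of two outer semicontinuous
and locally bounded set-valued maps, defined by cases on `D₁ \ D₂`, `D₂ \ D₁`,
and `D₁ ∩ D₂`, is outer semicontinuous and locally bounded relative to the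
closed set `D₁ ∪ D₂`. -/
theorem union_jump_map_osc_locally_bounded {m n : ℕ}
    (D₁ D₂ : Set (EuclideanSpace ℝ (Fin m)))
    (hD₁ : IsClosed D₁) (hD₂ : IsClosed D₂)
    (G₁ G₂ G : EuclideanSpace ℝ (Fin m) → Set (EuclideanSpace ℝ (Fin n)))
    (hG₁osc : OuterSemicontinuousRel D₁ G₁)
    (hG₁bdd : LocallyBoundedRel D₁ G₁)
    (hG₂osc : OuterSemicontinuousRel D₂ G₂)
    (hG₂bdd : LocallyBoundedRel D₂ G₂)
    (hGa : ∀ ζ ∈ D₁ \ D₂, G ζ = G₁ ζ)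
    (hGb : ∀ ζ ∈ D₂ \ D₁, G ζ = G₂ ζ)
    (hGc : ∀ ζ ∈ D₁ ∩ D₂, G ζ = G₁ ζ ∪ G₂ ζ) :
    IsClosed (D₁ ∪ D₂)
    ∧ OuterSemicontinuousRel (D₁ ∪ D₂) G
    ∧ LocallyBoundedRel (D₁ ∪ D₂) G := by
  have hclosed : IsClosed (D₁ ∪ D₂) := hD₁.union hD₂
  have hmem : ∀ ζ, ζ ∈ D₁ ∪ D₂ → ∀ y ∈ G ζ,
      (ζ ∈ D₁ ∧ y ∈ G₁ ζ) ∨ (ζ ∈ D₂ ∧ y ∈ G₂ ζ) := by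
    intro ζ hζ y hy
    by_cases h1 : ζ ∈ D₁ <;> by_cases h2 : ζ ∈ D₂
    · rw [hGc ζ ⟨h1, h2⟩] at hy
      rcases hy with hy | hy
      · exact Or.inl ⟨h1, hy⟩
      · exact Or.inr ⟨h2, hy⟩
    · rw [hGa ζ ⟨h1, h2⟩] at hy; exact Or.inl ⟨h1, hy⟩
    · rw [hGb ζ ⟨h2, h1⟩] at hy; exact Or.inr ⟨h2, hy⟩
    · exact absurd hζ (by simp [h1, h2])
  have hsup1 : ∀ z ∈ D₁, G₁ z ⊆ G z := by
    intro z hz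
    by_cases h2 : z ∈ D₂
    · rw [hGc z ⟨hz, h2⟩]; exact Set.subset_union_left
    · rw [hGa z ⟨hz, h2⟩]
  have hsup2 : ∀ z ∈ D₂, G₂ z ⊆ G z := by
    intro z hz
    by_cases h1 : z ∈ D₁
    · rw [hGc z ⟨h1, hz⟩]; exact Set.subset_union_right
    · rw [hGb z ⟨hz, h1⟩]
  refine ⟨hclosed, ?_, ?_⟩
  · intro ζ z y w hζD hζtend hzD hyG hytend
    have hcases : (∃ᶠ i in atTop, ζ i ∈ D₁ ∧ y i ∈ G₁ (ζ i)) ∨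
        (∃ᶠ i in atTop, ζ i ∈ D₂ ∧ y i ∈ G₂ (ζ i)) := by
      by_contra h
      push_neg at h
      obtain ⟨h1, h2⟩ := h
      simp only [← not_and] at h1 h2
      obtain ⟨i, hi1, hi2⟩ := (h1.and h2).exists
      rcases hmem (ζ i) (hζD i) (y i) (hyG i) with h | h
      exacts [hi1 h, hi2 h]
    rcases hcases with h | h
    · obtain ⟨φ, hφ, hP⟩ := Filter.extraction_of_frequently_atTop h
      have hζt : Tendsto (ζ ∘ φ) atTop (𝓝 z) := hζtend.comp hφ.tendsto_atTop
      have hyt : Tendsto (y ∘ φ) atTop (𝓝 w) := hytend.comp hφ.tendsto_atTop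
      have hz1 : z ∈ D₁ :=
        hD₁.mem_of_tendsto hζt (Filter.Eventually.of_forall fun i => (hP i).1)
      exact hsup1 z hz1 (hG₁osc (ζ ∘ φ) z (y ∘ φ) w (fun i => (hP i).1) hζt hz1
        (fun i => (hP i).2) hyt)
    · obtain ⟨φ, hφ, hP⟩ := Filter.extraction_of_frequently_atTop h
      have hζt : Tendsto (ζ ∘ φ) atTop (𝓝 z) := hζtend.comp hφ.tendsto_atTop
      have hyt : Tendsto (y ∘ φ) atTop (𝓝 w) := hytend.comp hφ.tendsto_atTop
      have hz2 : z ∈ D₂ :=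
        hD₂.mem_of_tendsto hζt (Filter.Eventually.of_forall fun i => (hP i).1)
      exact hsup2 z hz2 (hG₂osc (ζ ∘ φ) z (y ∘ φ) w (fun i => (hP i).1) hζt hz2
        (fun i => (hP i).2) hyt)
  · intro z hz
    by_cases h1 : z ∈ D₁ <;> by_cases h2 : z ∈ D₂
    · obtain ⟨V₁, hV₁, hB₁⟩ := hG₁bdd z h1
      obtain ⟨V₂, hV₂, hB₂⟩ := hG₂bdd z h2
      refine ⟨V₁ ∩ V₂, Filter.inter_mem hV₁ hV₂, (hB₁.union hB₂).subset ?_⟩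
      intro y hy
      simp only [Set.mem_iUnion] at hy
      obtain ⟨ζ, ⟨hζV, hζD⟩, hyG⟩ := hy
      rcases hmem ζ hζD y hyG with hc | hc
      · exact Or.inl (Set.mem_biUnion ⟨hζV.1, hc.1⟩ hc.2)
      · exact Or.inr (Set.mem_biUnion ⟨hζV.2, hc.1⟩ hc.2)
    · obtain ⟨V₁, hV₁, hB₁⟩ := hG₁bdd z h1
      refine ⟨V₁ ∩ D₂ᶜ, Filter.inter_mem hV₁ (hD₂.isOpen_compl.mem_nhds h2),
        hB₁.subset ?_⟩
      intro y hy
      simp only [Set.mem_iUnion] at hy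
      obtain ⟨ζ, ⟨hζV, hζD⟩, hyG⟩ := hy
      rcases hmem ζ hζD y hyG with hc | hc
      · exact Set.mem_biUnion ⟨hζV.1, hc.1⟩ hc.2
      · exact absurd hc.1 hζV.2
    · obtain ⟨V₂, hV₂, hB₂⟩ := hG₂bdd z h2
      refine ⟨V₂ ∩ D₁ᶜ, Filter.inter_mem hV₂ (hD₁.isOpen_compl.mem_nhds h1),
        hB₂.subset ?_⟩
      intro y hy
      simp only [Set.mem_iUnion] at hy
      obtain ⟨ζ, ⟨hζV, hζD⟩, hyG⟩ := hy
      rcases hmem ζ hζD y hyG with hc | hc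
      · exact absurd hc.1 hζV.2
      · exact Set.mem_biUnion ⟨hζV.1, hc.1⟩ hc.2
    · exact absurd hz (by simp [h1, h2])
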